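/- arXiv:2411.09976 — 4 statements merged into one kernel-verified Lean document; each statement's English description precedes it below -/
import Mathlib

section
/- For all natural numbers n, k, m (with the convention that a sum over an empty range is zero): ∑_{i=k}^{n−m} c(i+1, k+1) · c(n−i, m) · C(n, i) = C(k+m, k) · c(n+1, k+m+1), where c(·,·) are the unsigned Stirling numbers of the first kind and C(·,·) are binomial coefficients. -/
/-!
With the rising factorial `x^{(n)} = x (x+1) ⋯ (x+n-1) = ∑ₖ c(n,k) xᵏ` (`ascPochhammer`),
the identity `x^{(n+1)} = x (x+1)^{(n)}` gives `(x+1)^{(n)} = ∑ⱼ c(n+1,j+1) xʲ`. Compute the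
coefficient of `xᵏ yᵐ` in `(x+y+1)^{(n)}` two ways (in `ℕ[X][X]`, with `x = C X` and `y = X`):
Vandermonde's identity for rising factorials, applied to `(x+1) + y`, yields the left-hand side,
and expanding in powers of `x + y` yields `C(k+m,k) c(n+1,k+m+1)`.
-/

/-- Unsigned Stirling numbers of the first kind, defined by `c(0,0) = 1`,
`c(n,k) = 0` when `k > n` or (`n ≥ 1` and `k = 0`), and
`c(n+1,k) = n·c(n,k) + c(n,k-1)`. -/
def stirling1 : ℕ → ℕ → ℕ
  | 0, 0 => 1
  | 0, _ + 1 => 0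
  | _ + 1, 0 => 0
  | n + 1, k + 1 => n * stirling1 n (k + 1) + stirling1 n k

/-- Stirling numbers of the second kind, defined by `S(0,0) = 1`,
`S(n,k) = 0` when `k > n` or (`n ≥ 1` and `k = 0`), and
`S(n+1,k) = k·S(n,k) + S(n,k-1)`. -/
def stirling2 : ℕ → ℕ → ℕ
  | 0, 0 => 1
  | 0, _ + 1 => 0
  | _ + 1, 0 => 0
  | n + 1, k + 1 => (k + 1) * stirling2 n (k + 1) + stirling2 n k

open Polynomial Finset

theorem stirling1_eq_stirlingFirst : stirling1 = Nat.stirlingFirst := by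
  funext n k
  induction n generalizing k with
  | zero => cases k <;> rfl
  | succ n ih => cases k <;> simp [stirling1, Nat.stirlingFirst, ih]

namespace Polynomial

section Semiring

variable {S : Type*} [Semiring S]

theorem coeff_ascPochhammer (n k : ℕ) : (ascPochhammer S n).coeff k = n.stirlingFirst k := by
  induction n generalizing k with
  | zero => cases k <;> simp [coeff_one]
  | succ n ih =>
    rw [ascPochhammer_succ_right, mul_add, coeff_add, ← C_eq_natCast, coeff_mul_C, ih]
    cases k with
    | zero => cases n <;> simp
    | succ k =>
      rw [coeff_mul_X, ih, Nat.stirlingFirst_succ_succ]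
      push_cast
      rw [add_comm, Nat.cast_comm]

theorem coeff_ascPochhammer_comp_X_add_one (n k : ℕ) :
    ((ascPochhammer S n).comp (X + 1)).coeff k = (n + 1).stirlingFirst (k + 1) := by
  rw [← coeff_ascPochhammer, ascPochhammer_succ_left, coeff_X_mul]

theorem natDegree_ascPochhammer_comp_X_add_one_le (n : ℕ) :
    ((ascPochhammer S n).comp (X + 1)).natDegree ≤ n :=
  natDegree_le_iff_coeff_eq_zero.2 fun j hj => by
    rw [coeff_ascPochhammer_comp_X_add_one, Nat.stirlingFirst_eq_zero_of_lt (by omega),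
      Nat.cast_zero]

theorem ascPochhammer_eval_map {T : Type*} [Semiring T] (f : S →+* T) (n : ℕ) (a : S) :
    (ascPochhammer T n).eval (f a) = f ((ascPochhammer S n).eval a) := by
  rw [ascPochhammer_eval₂ f, eval₂_at_apply]

theorem coeff_coeff_C_X_add_X_pow (j k m : ℕ) :
    (((C X + X : S[X][X]) ^ j).coeff m).coeff k = if j = k + m then (j.choose m : S) else 0 := by
  rw [add_comm, coeff_X_add_C_pow, ← C_eq_natCast, coeff_mul_C, coeff_X_pow]
  by_cases hj : j = k + m
  · simp [hj]
  · rw [if_neg hj]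
    rcases lt_or_ge j m with hjm | hjm
    · simp [Nat.choose_eq_zero_of_lt hjm]
    · simp [if_neg (show k ≠ j - m by omega)]

end Semiring

section CommSemiring

variable {R : Type*} [CommSemiring R]

theorem ascPochhammer_eval_add_one (t : R) (n : ℕ) :
    (ascPochhammer R n).eval (t + 1)
      = ∑ j ∈ range (n + 1), ((n + 1).stirlingFirst (j + 1) : R) * t ^ j := by
  have hcomp : (ascPochhammer R n).eval (t + 1) = ((ascPochhammer R n).comp (X + 1)).eval t := by
    simp [eval_comp]
  rw [hcomp, eval_eq_sum_range' (Nat.lt_succ_of_le (natDegree_ascPochhammer_comp_X_add_one_le n))]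
  simp only [coeff_ascPochhammer_comp_X_add_one]

theorem ascPochhammer_eval_add (x y : R) (n : ℕ) :
    (ascPochhammer R n).eval (x + y) = ∑ ij ∈ antidiagonal n,
      n.choose ij.1 * ((ascPochhammer R ij.1).eval x * (ascPochhammer R ij.2).eval y) := by
  induction n with
  | zero => simp
  | succ n ih =>
    rw [sum_antidiagonal_choose_succ_mul
      (fun i j => (ascPochhammer R i).eval x * (ascPochhammer R j).eval y),
      ascPochhammer_succ_eval, ih, sum_mul, ← sum_add_distrib]
    refine sum_congr rfl fun ij hij => ?_
    rw [HasAntidiagonal.mem_antidiagonal] at hij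
    simp only [ascPochhammer_succ_eval]
    rw [Nat.choose_symm_of_eq_add hij.symm, ← hij]
    push_cast
    ring

end CommSemiring

theorem coeff_coeff_ascPochhammer_eval_C_X_add_X_add_one (n k m : ℕ) :
    (((ascPochhammer ℕ[X][X] n).eval (C X + X + 1)).coeff m).coeff k
      = (k + m).choose k * (n + 1).stirlingFirst (k + m + 1) := by
  rw [ascPochhammer_eval_add_one (R := ℕ[X][X]), finsetSum_coeff, finsetSum_coeff]
  simp only [coeff_natCast_mul, coeff_coeff_C_X_add_X_pow, Nat.cast_id, mul_ite, mul_zero,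
    sum_ite_eq', mem_range]
  split_ifs with hkm
  · rw [Nat.choose_symm_add, mul_comm]
  · rw [Nat.stirlingFirst_eq_zero_of_lt (by omega), mul_zero]

theorem coeff_coeff_ascPochhammer_eval_C_X_add_one_add_X (n k m : ℕ) :
    (((ascPochhammer ℕ[X][X] n).eval (C (X + 1) + X)).coeff m).coeff k
      = ∑ i ∈ range (n + 1),
          (i + 1).stirlingFirst (k + 1) * (n - i).stirlingFirst m * n.choose i := by
  rw [ascPochhammer_eval_add (R := ℕ[X][X]), Nat.sum_antidiagonal_eq_sum_range_succ_mk,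
    finsetSum_coeff, finsetSum_coeff]
  refine sum_congr rfl fun i _ => ?_
  have hx : (ascPochhammer ℕ[X] i).eval (X + 1) = (ascPochhammer ℕ i).comp (X + 1) :=
    ascPochhammer_eval₂ C i _
  rw [ascPochhammer_eval_map, hx, ascPochhammer_eval₂ C, eval₂_C_X, coeff_natCast_mul,
    coeff_C_mul, coeff_ascPochhammer, coeff_natCast_mul, coeff_mul_natCast,
    coeff_ascPochhammer_comp_X_add_one]
  simp only [Nat.cast_id]
  ring

end Polynomial

theorem Nat.stirlingFirst_shifted_convolution (n k m : ℕ) :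
    ∑ i ∈ range (n + 1), (i + 1).stirlingFirst (k + 1) * (n - i).stirlingFirst m * n.choose i
      = (k + m).choose k * (n + 1).stirlingFirst (k + m + 1) := by
  have hsplit : (C X + X + 1 : ℕ[X][X]) = C (X + 1) + X := by
    simp only [map_add, map_one]
    ring
  rw [← coeff_coeff_ascPochhammer_eval_C_X_add_one_add_X, ← hsplit,
    coeff_coeff_ascPochhammer_eval_C_X_add_X_add_one]

/-- Shifted Stirling convolution identity (Lemma 2 of Salminen–Stenlund 2021):
`∑_{i=k}^{n-m} c(i+1,k+1) c(n-i,m) C(n,i) = C(k+m,k) c(n+1,k+m+1)`. -/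
theorem stirling1_shifted_convolution (n k m : ℕ) :
    (∑ i ∈ Finset.Icc k (n - m),
        stirling1 (i + 1) (k + 1) * stirling1 (n - i) m * n.choose i)
      = (k + m).choose k * stirling1 (n + 1) (k + m + 1) := by
  rw [stirling1_eq_stirlingFirst, ← Nat.stirlingFirst_shifted_convolution]
  refine sum_subset (fun i hi => ?_) (fun i hi hi' => ?_)
  · rw [mem_Icc] at hi
    rw [mem_range]
    omega
  · rw [mem_range] at hi
    rw [mem_Icc] at hi'
    rcases lt_or_ge i k with hik | hik
    · rw [Nat.stirlingFirst_eq_zero_of_lt (by omega : i + 1 < k + 1), zero_mul, zero_mul]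
    · rw [Nat.stirlingFirst_eq_zero_of_lt (by omega : n - i < m), mul_zero, zero_mul]
end

section
/- Let a, l, j be natural numbers with 1 ≤ l ≤ j ≤ a−1 and let b be a real number. Then ∑_{i=l}^{a+l−j−1} (b+i) · C(a, i) · c(i, l) · c(a−i, j−l+1) = c(a, j+1) · ( b · C(j, l) + (a+b) · C(j, l−1) ), where the identity is understood in the real numbers. -/
open Finset


lemma stirling1_succ_succ (n k : ℕ) :
    stirling1 (n + 1) (k + 1) = n * stirling1 n (k + 1) + stirling1 n k := rfl

lemma stirling1_succ_zero (n : ℕ) : stirling1 (n + 1) 0 = 0 := rfl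
lemma stirling1_zero_succ (k : ℕ) : stirling1 0 (k + 1) = 0 := rfl

lemma stirling1_eq_zero_of_lt : ∀ {n k : ℕ}, n < k → stirling1 n k = 0 := by
  intro n
  induction n with
  | zero =>
    rintro (_|k) h
    · omega
    · rfl
  | succ n ih =>
    rintro (_|k) h
    · omega
    · rw [stirling1_succ_succ, ih (by omega), ih (by omega)]; simp

lemma sumA_left_zero (a m : ℕ) :
    ∑ i ∈ range (a + 1), a.choose i * stirling1 i 0 * stirling1 (a - i) m
      = stirling1 a m := by
  rw [Finset.sum_eq_single_of_mem 0 (by simp)]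
  · simp [stirling1]
  · rintro (_|i) _ h
    · omega
    · simp [stirling1_succ_zero]

lemma sumA_right_zero (a l : ℕ) :
    ∑ i ∈ range (a + 1), a.choose i * stirling1 i l * stirling1 (a - i) 0
      = stirling1 a l := by
  rw [Finset.sum_eq_single_of_mem a (by simp)]
  · simp [stirling1]
  · intro i hi h
    have hi' : i < a + 1 := by simpa using hi
    obtain ⟨t, ht⟩ : ∃ t, a - i = t + 1 := ⟨a - i - 1, by omega⟩
    rw [ht, stirling1_succ_zero, Nat.mul_zero]

lemma sumA (a : ℕ) : ∀ l m : ℕ,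
    ∑ i ∈ range (a + 1), a.choose i * stirling1 i l * stirling1 (a - i) m
      = (l + m).choose l * stirling1 a (l + m) := by
  induction a with
  | zero =>
    intro l m
    match l, m with
    | 0, 0 => simp [stirling1]
    | 0, m + 1 => simp [stirling1, stirling1_zero_succ]
    | l + 1, m =>
      rw [stirling1_eq_zero_of_lt (show 0 < l + 1 + m by omega)]
      simp [stirling1_zero_succ]
  | succ a ih =>
    intro l m
    match l, m with
    | 0, m => simpa using sumA_left_zero (a + 1) m
    | l + 1, 0 => simpa [Nat.choose_self] using sumA_right_zero (a + 1) (l + 1)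
    | l + 1, m + 1 =>
      -- peel i = 0 (zero term)
      have hS : ∑ i ∈ range (a + 1 + 1),
            (a + 1).choose i * stirling1 i (l + 1) * stirling1 (a + 1 - i) (m + 1)
          = ∑ k ∈ range (a + 1),
            (a + 1).choose (k + 1) * stirling1 (k + 1) (l + 1) * stirling1 (a - k) (m + 1) := by
        rw [Finset.sum_range_succ']
        simp [stirling1_zero_succ]
      -- W = U reindexing
      have hW : ∑ k ∈ range (a + 1),
            a.choose (k + 1) * stirling1 (k + 1) (l + 1) * stirling1 (a - k) (m + 1)
          = ∑ i ∈ range (a + 1),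
            a.choose i * stirling1 i (l + 1) * stirling1 (a + 1 - i) (m + 1) := by
        have h1 := Finset.sum_range_succ'
          (fun i => a.choose i * stirling1 i (l + 1) * stirling1 (a + 1 - i) (m + 1)) (a + 1)
        have h2 := Finset.sum_range_succ
          (fun i => a.choose i * stirling1 i (l + 1) * stirling1 (a + 1 - i) (m + 1)) (a + 1)
        simp only [stirling1_zero_succ, Nat.mul_zero, Nat.zero_mul, Nat.add_zero,
          Nat.choose_succ_self, Nat.succ_sub_succ] at h1 h2
        omega
      -- expand U with the recurrence on the right Stirling factor
      have hU : ∑ i ∈ range (a + 1),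
            a.choose i * stirling1 i (l + 1) * stirling1 (a + 1 - i) (m + 1)
          = (∑ i ∈ range (a + 1),
              (a - i) * (a.choose i * stirling1 i (l + 1) * stirling1 (a - i) (m + 1)))
            + ∑ i ∈ range (a + 1),
              a.choose i * stirling1 i (l + 1) * stirling1 (a - i) m := by
        rw [← Finset.sum_add_distrib]
        refine Finset.sum_congr rfl fun i hi => ?_
        have h1 : a + 1 - i = (a - i) + 1 := by
          simp only [mem_range] at hi; omega
        rw [h1, stirling1_succ_succ]
        ring
      rw [hS]
      have hterm : ∀ k ∈ range (a + 1),
          (a + 1).choose (k + 1) * stirling1 (k + 1) (l + 1) * stirling1 (a - k) (m + 1)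
            = (k * (a.choose k * stirling1 k (l + 1) * stirling1 (a - k) (m + 1))
                + a.choose k * stirling1 k l * stirling1 (a - k) (m + 1))
              + a.choose (k + 1) * stirling1 (k + 1) (l + 1) * stirling1 (a - k) (m + 1) := by
        intro k hk
        rw [Nat.choose_succ_succ, stirling1_succ_succ]
        ring
      rw [Finset.sum_congr rfl hterm, Finset.sum_add_distrib, Finset.sum_add_distrib, hW, hU]
      have hcomb : (∑ k ∈ range (a + 1),
            k * (a.choose k * stirling1 k (l + 1) * stirling1 (a - k) (m + 1)))
          + (∑ i ∈ range (a + 1),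
            (a - i) * (a.choose i * stirling1 i (l + 1) * stirling1 (a - i) (m + 1)))
          = a * ∑ i ∈ range (a + 1),
              a.choose i * stirling1 i (l + 1) * stirling1 (a - i) (m + 1) := by
        rw [← Finset.sum_add_distrib, Finset.mul_sum]
        refine Finset.sum_congr rfl fun i hi => ?_
        have h1 : i ≤ a := by simp only [mem_range] at hi; omega
        rw [← Nat.add_mul]
        congr 1
        omega
      have ih1 := ih (l + 1) (m + 1)
      have ih2 := ih l (m + 1)
      have ih3 := ih (l + 1) m
      have e1 : l + 1 + (m + 1) = l + m + 1 + 1 := by omega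
      have e2 : l + (m + 1) = l + m + 1 := by omega
      have e3 : l + 1 + m = l + m + 1 := by omega
      rw [e1] at ih1 ⊢
      rw [e2] at ih2
      rw [e3] at ih3
      rw [ih1] at hcomb
      have hprod : a * ((l + m + 1 + 1).choose (l + 1) * stirling1 a (l + m + 1 + 1))
            + (l + m + 1).choose l * stirling1 a (l + m + 1)
            + (l + m + 1).choose (l + 1) * stirling1 a (l + m + 1)
          = (l + m + 1 + 1).choose (l + 1) * stirling1 (a + 1) (l + m + 1 + 1) := by
        rw [stirling1_succ_succ, Nat.choose_succ_succ]
        ring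
      omega

lemma sumB (a l m : ℕ) :
    ∑ i ∈ range (a + 1), i * a.choose i * stirling1 i (l + 1) * stirling1 (a - i) m
      = a * ((l + m).choose l * stirling1 a (l + 1 + m)) := by
  induction a with
  | zero => simp
  | succ a ih =>
    rw [Finset.sum_range_succ']
    simp only [Nat.zero_mul, Nat.add_zero, Nat.succ_sub_succ]
    have hterm : ∀ k ∈ range (a + 1),
        (k + 1) * (a + 1).choose (k + 1) * stirling1 (k + 1) (l + 1) * stirling1 (a - k) m
          = (a + 1) * (k * a.choose k * stirling1 k (l + 1) * stirling1 (a - k) m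
              + a.choose k * stirling1 k l * stirling1 (a - k) m) := by
      intro k hk
      have hc : (k + 1) * (a + 1).choose (k + 1) = (a + 1) * a.choose k := by
        have h := Nat.add_one_mul_choose_eq a k
        rw [h]
        ring
      rw [stirling1_succ_succ]
      calc (k + 1) * (a + 1).choose (k + 1) * (k * stirling1 k (l + 1) + stirling1 k l)
            * stirling1 (a - k) m
          = (k + 1) * (a + 1).choose (k + 1) * (k * stirling1 k (l + 1) + stirling1 k l)
            * stirling1 (a - k) m := rfl
        _ = (a + 1) * a.choose k * (k * stirling1 k (l + 1) + stirling1 k l)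
            * stirling1 (a - k) m := by rw [hc]
        _ = (a + 1) * (k * a.choose k * stirling1 k (l + 1) * stirling1 (a - k) m
              + a.choose k * stirling1 k l * stirling1 (a - k) m) := by ring
    rw [Finset.sum_congr rfl hterm, ← Finset.mul_sum, Finset.sum_add_distrib, ih, sumA a l m]
    have e1 : l + 1 + m = l + m + 1 := by omega
    rw [e1, stirling1_succ_succ a (l + m)]
    ring

/-- Evaluation of the innermost (weighted) sum in Appendix A:
for `1 ≤ l ≤ j ≤ a - 1` and a real `b`,
`∑_{i=l}^{a+l-j-1} (b+i) C(a,i) c(i,l) c(a-i, j-l+1)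
  = c(a, j+1) (b·C(j,l) + (a+b)·C(j,l-1))`. -/
theorem stirling1_weighted_inner_sum (a l j : ℕ) (b : ℝ)
    (hl : 1 ≤ l) (hlj : l ≤ j) (hja : j ≤ a - 1) :
    (∑ i ∈ Finset.Icc l (a + l - j - 1),
        (b + (i : ℝ)) * (a.choose i : ℝ) * (stirling1 i l : ℝ) *
          (stirling1 (a - i) (j - l + 1) : ℝ))
      = (stirling1 a (j + 1) : ℝ) *
          (b * (j.choose l : ℝ) + ((a : ℝ) + b) * (j.choose (l - 1) : ℝ)) := by
  obtain ⟨l0, rfl⟩ : ∃ l0, l = l0 + 1 := ⟨l - 1, by omega⟩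
  obtain ⟨m0, rfl⟩ : ∃ m0, j = l0 + 1 + m0 := ⟨j - (l0 + 1), by omega⟩
  have haj : l0 + 1 + m0 + 1 ≤ a := by omega
  have hb : a + (l0 + 1) - (l0 + 1 + m0) - 1 = a - m0 - 1 := by omega
  have hm : l0 + 1 + m0 - (l0 + 1) + 1 = m0 + 1 := by omega
  rw [hb, hm]
  -- extend the sum to range (a+1)
  have hsub : Finset.Icc (l0 + 1) (a - m0 - 1) ⊆ range (a + 1) := by
    intro i hi
    simp only [Finset.mem_Icc, Finset.mem_range] at hi ⊢
    omega
  have hext : (∑ i ∈ Finset.Icc (l0 + 1) (a - m0 - 1),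
        (b + (i : ℝ)) * (a.choose i : ℝ) * (stirling1 i (l0 + 1) : ℝ) *
          (stirling1 (a - i) (m0 + 1) : ℝ))
      = ∑ i ∈ range (a + 1),
        (b + (i : ℝ)) * (a.choose i : ℝ) * (stirling1 i (l0 + 1) : ℝ) *
          (stirling1 (a - i) (m0 + 1) : ℝ) := by
    refine Finset.sum_subset hsub fun i hi hni => ?_
    simp only [Finset.mem_Icc, Finset.mem_range] at hi hni
    rcases lt_or_ge i (l0 + 1) with h | h
    · rw [stirling1_eq_zero_of_lt h]
      simp
    · have : a - i < m0 + 1 := by omega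
      rw [stirling1_eq_zero_of_lt this]
      simp
  rw [hext]
  -- split into the two convolution sums
  have hsplit : (∑ i ∈ range (a + 1),
        (b + (i : ℝ)) * (a.choose i : ℝ) * (stirling1 i (l0 + 1) : ℝ) *
          (stirling1 (a - i) (m0 + 1) : ℝ))
      = b * (∑ i ∈ range (a + 1),
          ((a.choose i * stirling1 i (l0 + 1) * stirling1 (a - i) (m0 + 1) : ℕ) : ℝ))
        + ∑ i ∈ range (a + 1),
          ((i * a.choose i * stirling1 i (l0 + 1) * stirling1 (a - i) (m0 + 1) : ℕ) : ℝ) := by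
    rw [Finset.mul_sum, ← Finset.sum_add_distrib]
    refine Finset.sum_congr rfl fun i hi => ?_
    push_cast
    ring
  rw [hsplit]
  have hA := sumA a (l0 + 1) (m0 + 1)
  have hB := sumB a l0 (m0 + 1)
  have hA' : (∑ i ∈ range (a + 1),
        ((a.choose i * stirling1 i (l0 + 1) * stirling1 (a - i) (m0 + 1) : ℕ) : ℝ))
      = ((l0 + 1 + (m0 + 1)).choose (l0 + 1) : ℝ) * (stirling1 a (l0 + 1 + (m0 + 1)) : ℝ) := by
    rw [← Nat.cast_sum]
    exact_mod_cast congrArg (fun n : ℕ => (n : ℝ)) hA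
  have hB' : (∑ i ∈ range (a + 1),
        ((i * a.choose i * stirling1 i (l0 + 1) * stirling1 (a - i) (m0 + 1) : ℕ) : ℝ))
      = (a : ℝ) * (((l0 + (m0 + 1)).choose l0 : ℝ) * (stirling1 a (l0 + 1 + (m0 + 1)) : ℝ)) := by
    rw [← Nat.cast_sum]
    exact_mod_cast congrArg (fun n : ℕ => (n : ℝ)) hB
  rw [hA', hB']
  have e1 : l0 + 1 + (m0 + 1) = l0 + 1 + m0 + 1 := by omega
  have e2 : l0 + (m0 + 1) = l0 + 1 + m0 := by omega
  have e3 : l0 + 1 + m0 + 1 - 1 = l0 + 1 + m0 := by omega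
  rw [e1, e2]
  simp only [Nat.add_sub_cancel]
  have hch : ((l0 + 1 + m0 + 1).choose (l0 + 1) : ℝ)
      = ((l0 + 1 + m0).choose l0 : ℝ) + ((l0 + 1 + m0).choose (l0 + 1) : ℝ) := by
    rw [show l0 + 1 + m0 + 1 = (l0 + 1 + m0) + 1 from rfl]
    exact_mod_cast congrArg (fun n : ℕ => (n : ℝ)) (Nat.choose_succ_succ (l0 + 1 + m0) l0)
  rw [hch]
  ring
end

section
/- Let a, k, j be natural numbers with 1 ≤ k ≤ j ≤ a−1 and let b be a real number. Then ∑_{l=k}^{j} S(l, k) · ( ∑_{i=l}^{a+l−j−1} (b+i) · C(a, i) · c(i, l) · c(a−i, j−l+1) ) = c(a, j+1) · S(j+1, k+1) · ( b + (a+b) · k ), where the identity is understood in the real numbers. -/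
lemma s1_succ (n k : ℕ) : stirling1 (n+1) (k+1) = n * stirling1 n (k+1) + stirling1 n k := rfl
lemma s1_zero (n : ℕ) : stirling1 (n+1) 0 = 0 := rfl
lemma s1_zero' (k : ℕ) : stirling1 0 (k+1) = 0 := rfl
lemma s1_00 : stirling1 0 0 = 1 := rfl

lemma s1_of_lt : ∀ n k, n < k → stirling1 n k = 0 := by
  intro n
  induction n with
  | zero => intro k hk; cases k with
    | zero => omega
    | succ k => rfl
  | succ n ih =>
    intro k hk
    cases k with
    | zero => omega
    | succ k => rw [s1_succ, ih (k+1) (by omega), ih k (by omega)]; ring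

lemma convF_l0 (a m : ℕ) :
    ∑ i ∈ Finset.range (a+1), a.choose i * stirling1 i 0 * stirling1 (a-i) m
      = (0+m).choose 0 * stirling1 a (0+m) := by
  rw [Finset.sum_eq_single 0]
  · simp [s1_00]
  · intro i _ hi
    obtain ⟨t, rfl⟩ := Nat.exists_eq_succ_of_ne_zero hi
    simp [s1_zero]
  · intro h; simp at h

lemma convF_m0 (a l : ℕ) :
    ∑ i ∈ Finset.range (a+1), a.choose i * stirling1 i l * stirling1 (a-i) 0
      = (l+0).choose l * stirling1 a (l+0) := by
  rw [Finset.sum_eq_single a]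
  · simp [s1_00]
  · intro i hi hia
    have : a - i ≠ 0 := by simp at hi; omega
    obtain ⟨t, ht⟩ := Nat.exists_eq_succ_of_ne_zero this
    rw [ht]; simp [s1_zero]
  · intro h; simp at h

lemma convF : ∀ a l m, ∑ i ∈ Finset.range (a+1), a.choose i * stirling1 i l * stirling1 (a-i) m
    = (l+m).choose l * stirling1 a (l+m) := by
  intro a
  induction a with
  | zero =>
    intro l m
    cases l with
    | zero => simp [s1_00]
    | succ l =>
      rw [show l+1+m = (l+m)+1 from by ring]
      simp [s1_zero']
  | succ a ih =>
    intro l m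
    cases l with
    | zero => exact convF_l0 (a+1) m
    | succ l =>
    cases m with
    | zero => exact convF_m0 (a+1) (l+1)
    | succ m =>
      rw [Finset.sum_range_succ']
      simp only [Nat.succ_sub_succ, Nat.choose_zero_right, s1_zero', Nat.mul_zero, Nat.zero_mul,
        Nat.mul_one, Nat.add_zero, Nat.sub_zero, Nat.one_mul, Nat.choose_succ_succ, Nat.add_mul,
        Nat.succ_eq_add_one, Finset.sum_add_distrib]
      have hsum3 : (∑ i ∈ Finset.range (a+1), a.choose (i+1) * stirling1 (i+1) (l+1) * stirling1 (a-i) (m+1))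
          = ∑ i ∈ Finset.range (a+1), a.choose i * stirling1 i (l+1) * stirling1 (a+1-i) (m+1) := by
        have h1 := Finset.sum_range_succ' (fun i => a.choose i * stirling1 i (l+1) * stirling1 (a+1-i) (m+1)) (a+1)
        have h2 := Finset.sum_range_succ (fun i => a.choose i * stirling1 i (l+1) * stirling1 (a+1-i) (m+1)) (a+1)
        simp only [Nat.succ_sub_succ, Nat.choose_zero_right, s1_zero', Nat.mul_zero, Nat.zero_mul,
          Nat.mul_one, Nat.add_zero, Nat.choose_succ_self, Nat.one_mul] at h1 h2
        omega
      rw [hsum3]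
      have key : (∑ i ∈ Finset.range (a+1), a.choose i * stirling1 (i+1) (l+1) * stirling1 (a-i) (m+1))
          + (∑ i ∈ Finset.range (a+1), a.choose i * stirling1 i (l+1) * stirling1 (a+1-i) (m+1))
          = a * (∑ i ∈ Finset.range (a+1), a.choose i * stirling1 i (l+1) * stirling1 (a-i) (m+1))
            + ((∑ i ∈ Finset.range (a+1), a.choose i * stirling1 i l * stirling1 (a-i) (m+1))
            + (∑ i ∈ Finset.range (a+1), a.choose i * stirling1 i (l+1) * stirling1 (a-i) m)) := by
        rw [Finset.mul_sum, ← Finset.sum_add_distrib, ← Finset.sum_add_distrib,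
          ← Finset.sum_add_distrib]
        apply Finset.sum_congr rfl
        intro i hi
        simp only [Finset.mem_range] at hi
        have hai : a + 1 - i = (a - i) + 1 := by omega
        rw [hai, s1_succ, s1_succ]
        set x := a - i with hx
        rw [show a = i + x from by omega]
        ring
      rw [key, ih (l+1) (m+1), ih l (m+1), ih (l+1) m]
      rw [show l+1+(m+1) = (l+m+1)+1 from by ring, show l+(m+1) = l+m+1 from by ring,
        show l+1+m = (l+m+1) from by ring]
      rw [s1_succ a (l+m+1), Nat.choose_succ_succ (l+m+1) l]
      ring

lemma convT_m0 (a l : ℕ) :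
    ∑ i ∈ Finset.range (a+1), a.choose i * stirling1 (i+1) (l+1) * stirling1 (a-i) 0
      = (l+0).choose l * stirling1 (a+1) (l+0+1) := by
  rw [Finset.sum_eq_single a]
  · simp [s1_00]
  · intro i hi hia
    have : a - i ≠ 0 := by simp at hi; omega
    obtain ⟨t, ht⟩ := Nat.exists_eq_succ_of_ne_zero this
    rw [ht]; simp [s1_zero]
  · intro h; simp at h

lemma convT : ∀ a l m, ∑ i ∈ Finset.range (a+1), a.choose i * stirling1 (i+1) (l+1) * stirling1 (a-i) m
    = (l+m).choose l * stirling1 (a+1) (l+m+1) := by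
  intro a
  induction a with
  | zero =>
    intro l m
    cases l with
    | zero =>
      cases m with
      | zero => simp [s1_succ, s1_00]
      | succ m => simp [s1_succ, s1_zero']
    | succ l =>
      rw [show l+1+m+1 = (l+m+1)+1 from by ring]
      simp [s1_succ, s1_zero', s1_00]
  | succ a ih =>
    intro l m
    cases m with
    | zero => exact convT_m0 (a+1) l
    | succ m =>
      rw [Finset.sum_range_succ']
      simp only [Nat.succ_sub_succ, Nat.choose_zero_right, Nat.sub_zero, Nat.one_mul,
        Nat.choose_succ_succ, Nat.add_mul, Nat.succ_eq_add_one, Finset.sum_add_distrib]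
      have hsum3 : (∑ x ∈ Finset.range (a+1), a.choose (x+1) * stirling1 (x+1+1) (l+1) * stirling1 (a-x) (m+1))
            + stirling1 (0+1) (l+1) * stirling1 (a+1) (m+1)
          = ∑ x ∈ Finset.range (a+1), a.choose x * stirling1 (x+1) (l+1) * stirling1 (a+1-x) (m+1) := by
        have h1 := Finset.sum_range_succ' (fun i => a.choose i * stirling1 (i+1) (l+1) * stirling1 (a+1-i) (m+1)) (a+1)
        have h2 := Finset.sum_range_succ (fun i => a.choose i * stirling1 (i+1) (l+1) * stirling1 (a+1-i) (m+1)) (a+1)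
        simp only [Nat.succ_sub_succ, Nat.choose_zero_right, Nat.sub_zero, Nat.one_mul,
          Nat.choose_succ_self, Nat.zero_mul, Nat.succ_eq_add_one] at h1 h2
        omega
      rw [add_assoc, hsum3]
      have key : (∑ x ∈ Finset.range (a+1), a.choose x * stirling1 (x+1+1) (l+1) * stirling1 (a-x) (m+1))
          + (∑ x ∈ Finset.range (a+1), a.choose x * stirling1 (x+1) (l+1) * stirling1 (a+1-x) (m+1))
          = (a+1) * (∑ x ∈ Finset.range (a+1), a.choose x * stirling1 (x+1) (l+1) * stirling1 (a-x) (m+1))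
            + ((∑ x ∈ Finset.range (a+1), a.choose x * stirling1 (x+1) l * stirling1 (a-x) (m+1))
            + (∑ x ∈ Finset.range (a+1), a.choose x * stirling1 (x+1) (l+1) * stirling1 (a-x) m)) := by
        rw [Finset.mul_sum, ← Finset.sum_add_distrib, ← Finset.sum_add_distrib,
          ← Finset.sum_add_distrib]
        apply Finset.sum_congr rfl
        intro i hi
        simp only [Finset.mem_range] at hi
        have hai : a + 1 - i = (a - i) + 1 := by omega
        rw [hai, s1_succ (i+1) l, s1_succ (a-i) m]
        set x := a - i with hx
        rw [show a = i + x from by omega]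
        ring
      rw [key, ih l (m+1), ih l m]
      cases l with
      | zero =>
        have hz : (∑ x ∈ Finset.range (a+1), a.choose x * stirling1 (x+1) 0 * stirling1 (a-x) (m+1)) = 0 :=
          Finset.sum_eq_zero (fun i _ => by simp [s1_zero])
        rw [hz]
        simp only [Nat.zero_add, Nat.choose_zero_right, Nat.one_mul]
        rw [s1_succ (a+1) (m+1)]
      | succ l' =>
        rw [ih l' (m+1)]
        simp only [show l'+1+(m+1) = (l'+m+1)+1 from by omega, show l'+(m+1) = l'+m+1 from by omega,
          show l'+1+m = l'+m+1 from by omega]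
        rw [s1_succ (a+1) ((l'+m+1)+1), Nat.choose_succ_succ (l'+m+1) l']
        ring

lemma s2_succ (n k : ℕ) : stirling2 (n+1) (k+1) = (k+1) * stirling2 n (k+1) + stirling2 n k := rfl
lemma s2_zero (n : ℕ) : stirling2 (n+1) 0 = 0 := rfl
lemma s2_zero' (k : ℕ) : stirling2 0 (k+1) = 0 := rfl
lemma s2_00 : stirling2 0 0 = 1 := rfl

lemma s2_of_lt : ∀ n k, n < k → stirling2 n k = 0 := by
  intro n
  induction n with
  | zero => intro k hk; cases k with
    | zero => omega
    | succ k => rfl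
  | succ n ih =>
    intro k hk
    cases k with
    | zero => omega
    | succ k => rw [s2_succ, ih (k+1) (by omega), ih k (by omega)]; ring

lemma convW (a l m : ℕ) :
    ∑ i ∈ Finset.range (a+1), i * a.choose i * stirling1 i (l+1) * stirling1 (a-i) m
      = a * ((l+m).choose l * stirling1 a (l+m+1)) := by
  have hpt : (∑ i ∈ Finset.range (a+1), i * a.choose i * stirling1 i (l+1) * stirling1 (a-i) m)
      + (∑ i ∈ Finset.range (a+1), a.choose i * stirling1 i l * stirling1 (a-i) m)
      = ∑ i ∈ Finset.range (a+1), a.choose i * stirling1 (i+1) (l+1) * stirling1 (a-i) m := by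
    rw [← Finset.sum_add_distrib]
    exact Finset.sum_congr rfl (fun i _ => by rw [s1_succ i l]; ring)
  rw [convF, convT, s1_succ a (l+m)] at hpt
  rw [Nat.mul_add] at hpt
  have h2 := Nat.add_right_cancel hpt
  rw [h2]; ring

lemma convE : ∀ n k, ∑ i ∈ Finset.range (n+1), n.choose i * stirling2 i k
    = stirling2 (n+1) (k+1) := by
  intro n
  induction n with
  | zero =>
    intro k
    cases k with
    | zero => simp [s2_succ, s2_00, show stirling2 0 1 = 0 from rfl]
    | succ k => simp [s2_succ, s2_zero']
  | succ n ih =>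
    intro k
    rw [Finset.sum_range_succ']
    simp only [Nat.choose_succ_succ, Nat.add_mul, Finset.sum_add_distrib,
      Nat.choose_zero_right, Nat.one_mul, Nat.succ_eq_add_one]
    have hsum3 : (∑ i ∈ Finset.range (n+1), n.choose (i+1) * stirling2 (i+1) k) + stirling2 0 k
        = ∑ i ∈ Finset.range (n+1), n.choose i * stirling2 i k := by
      have h1 := Finset.sum_range_succ' (fun i => n.choose i * stirling2 i k) (n+1)
      have h2 := Finset.sum_range_succ (fun i => n.choose i * stirling2 i k) (n+1)
      simp only [Nat.choose_zero_right, Nat.one_mul, Nat.choose_succ_self, Nat.zero_mul,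
        Nat.succ_eq_add_one] at h1 h2
      omega
    rw [add_assoc, hsum3, ih k]
    cases k with
    | zero =>
      have hz : (∑ i ∈ Finset.range (n+1), n.choose i * stirling2 (i+1) 0) = 0 :=
        Finset.sum_eq_zero (fun i _ => by simp [s2_zero])
      rw [hz, s2_succ (n+1) 0, s2_zero]
      ring
    | succ k' =>
      have hexp : (∑ i ∈ Finset.range (n+1), n.choose i * stirling2 (i+1) (k'+1))
          = (k'+1) * (∑ i ∈ Finset.range (n+1), n.choose i * stirling2 i (k'+1))
            + ∑ i ∈ Finset.range (n+1), n.choose i * stirling2 i k' := by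
        rw [Finset.mul_sum, ← Finset.sum_add_distrib]
        exact Finset.sum_congr rfl (fun i _ => by rw [s2_succ i k']; ring)
      rw [hexp, ih (k'+1), ih k', s2_succ (n+1) (k'+1)]
      ring

lemma I1R (k j : ℕ) (hkj : k ≤ j) :
    (∑ l ∈ Finset.Icc k j, (((j+1).choose l : ℕ) : ℝ) * (stirling2 l k : ℝ))
      = ((k:ℝ)+1) * (stirling2 (j+1) (k+1) : ℝ) := by
  have hs : (∑ l ∈ Finset.Icc k j, (j+1).choose l * stirling2 l k)
      = ∑ l ∈ Finset.range (j+1), (j+1).choose l * stirling2 l k := by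
    apply Finset.sum_subset
    · intro l hl; simp only [Finset.mem_Icc] at hl; simp only [Finset.mem_range]; omega
    · intro l hl hnl
      simp only [Finset.mem_range] at hl
      simp only [Finset.mem_Icc, not_and, not_le] at hnl
      rw [s2_of_lt l k (by omega)]; ring
  have h2 := Finset.sum_range_succ (fun l => (j+1).choose l * stirling2 l k) (j+1)
  rw [convE (j+1) k] at h2
  simp only [Nat.choose_self, Nat.one_mul] at h2
  have hsr := congrArg (Nat.cast (R := ℝ)) hs
  have hc2 := congrArg (Nat.cast (R := ℝ)) h2
  have hsc := congrArg (Nat.cast (R := ℝ)) (s2_succ (j+1) k)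
  push_cast at hsr hc2 hsc
  linear_combination hsr - hc2 + hsc

lemma I2R (k' j : ℕ) (h : k'+1 ≤ j) :
    (∑ l ∈ Finset.Icc (k'+1) j, ((j.choose (l-1) : ℕ) : ℝ) * (stirling2 l (k'+1) : ℝ))
      = ((k':ℝ)+1) * (stirling2 (j+1) (k'+1+1) : ℝ) := by
  have hsub : (∑ l ∈ Finset.Icc (k'+1) j, j.choose (l-1) * stirling2 l (k'+1))
      = ∑ l ∈ Finset.range (j+1), j.choose (l-1) * stirling2 l (k'+1) := by
    apply Finset.sum_subset
    · intro l hl; simp only [Finset.mem_Icc] at hl; simp only [Finset.mem_range]; omega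
    · intro l hl hnl
      simp only [Finset.mem_range] at hl
      simp only [Finset.mem_Icc, not_and, not_le] at hnl
      rw [s2_of_lt l (k'+1) (by omega)]; ring
  have hA : (∑ l ∈ Finset.Icc (k'+1) j, j.choose (l-1) * stirling2 l (k'+1))
      = (k'+1) * (∑ l ∈ Finset.range j, j.choose l * stirling2 l (k'+1))
        + ∑ l ∈ Finset.range j, j.choose l * stirling2 l k' := by
    rw [hsub, Finset.sum_range_succ' (fun l => j.choose (l-1) * stirling2 l (k'+1)) j]
    simp only [Nat.add_sub_cancel, Nat.zero_sub, s2_zero', Nat.mul_zero, Nat.add_zero]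
    rw [Finset.mul_sum, ← Finset.sum_add_distrib]
    exact Finset.sum_congr rfl (fun l _ => by rw [s2_succ l k']; ring)
  have ha := Finset.sum_range_succ (fun l => j.choose l * stirling2 l (k'+1)) j
  rw [convE j (k'+1)] at ha
  simp only [Nat.choose_self, Nat.one_mul] at ha
  have hb := Finset.sum_range_succ (fun l => j.choose l * stirling2 l k') j
  rw [convE j k'] at hb
  simp only [Nat.choose_self, Nat.one_mul] at hb
  have hAc := congrArg (Nat.cast (R := ℝ)) hA
  have hac := congrArg (Nat.cast (R := ℝ)) ha
  have hbc := congrArg (Nat.cast (R := ℝ)) hb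
  have hsc := congrArg (Nat.cast (R := ℝ)) (s2_succ j k')
  push_cast at hAc hac hbc hsc
  linear_combination hAc - ((k':ℝ)+1) * hac - hbc + hsc

lemma inner_eval (a j l : ℕ) (b : ℝ) (hl1 : 1 ≤ l) (hlj : l ≤ j) (hja : j + 1 ≤ a) :
    (∑ i ∈ Finset.Icc l (a + l - j - 1),
        (b + (i : ℝ)) * (a.choose i : ℝ) * (stirling1 i l : ℝ) * (stirling1 (a-i) (j-l+1) : ℝ))
      = (b * (((j+1).choose l : ℕ) : ℝ) + (a:ℝ) * ((j.choose (l-1) : ℕ) : ℝ))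
        * (stirling1 a (j+1) : ℝ) := by
  obtain ⟨l', rfl⟩ : ∃ l', l = l' + 1 := ⟨l - 1, by omega⟩
  set m := j - (l'+1) + 1 with hm
  have hmle : m ≤ a := by omega
  rw [show a + (l'+1) - j - 1 = a - m from by omega]
  rw [Finset.sum_subset
    (show Finset.Icc (l'+1) (a-m) ⊆ Finset.range (a+1) by
      intro x hx; simp only [Finset.mem_Icc] at hx; simp only [Finset.mem_range]; omega)
    (by
      intro i hi hni
      simp only [Finset.mem_range] at hi
      simp only [Finset.mem_Icc, not_and, not_le] at hni
      by_cases hcase : i < l' + 1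
      · rw [s1_of_lt i (l'+1) hcase]; ring
      · have : a - i < m := by omega
        rw [s1_of_lt (a-i) m this]; ring)]
  have hsplit : (∑ i ∈ Finset.range (a+1),
        (b + (i:ℝ)) * (a.choose i : ℝ) * (stirling1 i (l'+1) : ℝ) * (stirling1 (a-i) m : ℝ))
      = b * (∑ i ∈ Finset.range (a+1),
          (a.choose i : ℝ) * (stirling1 i (l'+1) : ℝ) * (stirling1 (a-i) m : ℝ))
        + ∑ i ∈ Finset.range (a+1),
          (i:ℝ) * (a.choose i : ℝ) * (stirling1 i (l'+1) : ℝ) * (stirling1 (a-i) m : ℝ) := by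
    rw [Finset.mul_sum, ← Finset.sum_add_distrib]
    exact Finset.sum_congr rfl (fun i _ => by ring)
  rw [hsplit]
  have hF := convF a (l'+1) m
  rw [show l' + 1 + m = j + 1 from by omega] at hF
  have hW := convW a l' m
  rw [show l' + m = j from by omega] at hW
  have hFc := congrArg (Nat.cast (R := ℝ)) hF
  have hWc := congrArg (Nat.cast (R := ℝ)) hW
  push_cast at hFc hWc
  rw [hFc, hWc, show l' + 1 - 1 = l' from by omega]
  ring

/-- The combined double-sum evaluation from Appendix A: for `1 ≤ k ≤ j ≤ a - 1`
and a real `b`,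
`∑_{l=k}^{j} S(l,k) ∑_{i=l}^{a+l-j-1} (b+i) C(a,i) c(i,l) c(a-i, j-l+1)
  = c(a, j+1) S(j+1, k+1) (b + (a+b)·k)`. -/
theorem stirling_double_sum_evaluation (a k j : ℕ) (b : ℝ)
    (hk : 1 ≤ k) (hkj : k ≤ j) (hja : j ≤ a - 1) :
    (∑ l ∈ Finset.Icc k j, (stirling2 l k : ℝ) *
        ∑ i ∈ Finset.Icc l (a + l - j - 1),
          (b + (i : ℝ)) * (a.choose i : ℝ) * (stirling1 i l : ℝ) *
            (stirling1 (a - i) (j - l + 1) : ℝ))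
      = (stirling1 a (j + 1) : ℝ) * (stirling2 (j + 1) (k + 1) : ℝ) *
          (b + ((a : ℝ) + b) * (k : ℝ)) := by
  obtain ⟨k', rfl⟩ : ∃ k', k = k' + 1 := ⟨k - 1, by omega⟩
  have ha : j + 1 ≤ a := by omega
  have houter : ∀ l ∈ Finset.Icc (k'+1) j,
      (stirling2 l (k'+1) : ℝ) *
        (∑ i ∈ Finset.Icc l (a + l - j - 1),
          (b + (i : ℝ)) * (a.choose i : ℝ) * (stirling1 i l : ℝ) *
            (stirling1 (a - i) (j - l + 1) : ℝ))
      = (stirling1 a (j+1) : ℝ) *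
          (b * ((((j+1).choose l : ℕ)) : ℝ) * (stirling2 l (k'+1) : ℝ)
            + (a:ℝ) * (((j.choose (l-1) : ℕ)) : ℝ) * (stirling2 l (k'+1) : ℝ)) := by
    intro l hl
    simp only [Finset.mem_Icc] at hl
    rw [inner_eval a j l b (by omega) (by omega) ha]
    ring
  rw [Finset.sum_congr rfl houter, ← Finset.mul_sum]
  have hsplit : (∑ l ∈ Finset.Icc (k'+1) j,
        (b * ((((j+1).choose l : ℕ)) : ℝ) * (stirling2 l (k'+1) : ℝ)
          + (a:ℝ) * (((j.choose (l-1) : ℕ)) : ℝ) * (stirling2 l (k'+1) : ℝ)))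
      = b * (∑ l ∈ Finset.Icc (k'+1) j, (((j+1).choose l : ℕ) : ℝ) * (stirling2 l (k'+1) : ℝ))
        + (a:ℝ) * (∑ l ∈ Finset.Icc (k'+1) j, ((j.choose (l-1) : ℕ) : ℝ) * (stirling2 l (k'+1) : ℝ)) := by
    rw [Finset.mul_sum, Finset.mul_sum, ← Finset.sum_add_distrib]
    exact Finset.sum_congr rfl (fun l _ => by ring)
  rw [hsplit, I1R (k'+1) j hkj, I2R k' j hkj]
  push_cast
  ring
end

section
/- Let r ≥ 1 and let n₁, …, n_r be positive integers and β₁, …, β_r real numbers; write N = n₁+⋯+n_r. Then ∑ over all tuples (k₁,l₁,…,k_r,l_r) with 1 ≤ k_j ≤ l_j ≤ n_j of (−1)^{K−1} · ( (K−1)! / (N−1)! ) · (−1/2)^{L−1} · ∏_{j=1}^{r} c(n_j, l_j) S(l_j, k_j) β_j^{k_j} = ∑ over all tuples (k₁,…,k_r) with 1 ≤ k_j ≤ n_j of 2^{−(2N−K−1)} · ( (K−1)! / (N−1)! ) · ∏_{j=1}^{r} ( (2n_j−k_j−1)! · β_j^{k_j} ) / ( (k_j−1)! · (n_j−k_j)!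 ), where K = k₁+⋯+k_r and L = l₁+⋯+l_r. -/
lemma stirling1_eq_zero : ∀ n k : ℕ, n < k → stirling1 n k = 0 := by
  intro n
  induction n with
  | zero =>
    intro k hk
    cases k with
    | zero => omega
    | succ k => rfl
  | succ n ih =>
    intro k hk
    cases k with
    | zero => omega
    | succ k =>
      show n * stirling1 n (k+1) + stirling1 n k = 0
      rw [ih (k+1) (by omega), ih k (by omega)]
      simp

lemma stirling2_eq_zero : ∀ n k : ℕ, n < k → stirling2 n k = 0 := by
  intro n
  induction n with
  | zero =>
    intro k hk
    cases k with
    | zero => omega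
    | succ k => rfl
  | succ n ih =>
    intro k hk
    cases k with
    | zero => omega
    | succ k =>
      show (k+1) * stirling2 n (k+1) + stirling2 n k = 0
      rw [ih (k+1) (by omega), ih k (by omega)]
      simp

noncomputable def F (n k : ℕ) : ℝ :=
  ∑ l ∈ Finset.range (n+1), (stirling1 n l : ℝ) * (stirling2 l k : ℝ) * (-1/2 : ℝ)^l

lemma F_succ_succ (n k : ℕ) :
    F (n+1) (k+1) = ((n:ℝ) + (-1/2) * ((k:ℝ)+1)) * F n (k+1) + (-1/2) * F n k := by
  have hshift : ∑ l ∈ Finset.range (n+1),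
      (stirling1 n (l+1) : ℝ) * (stirling2 (l+1) (k+1) : ℝ) * (-1/2:ℝ)^(l+1) = F n (k+1) := by
    have h := Finset.sum_range_succ'
      (fun l => (stirling1 n l : ℝ) * (stirling2 l (k+1) : ℝ) * (-1/2:ℝ)^l) (n+1)
    rw [Finset.sum_range_succ] at h
    have h0 : stirling2 0 (k+1) = 0 := rfl
    have htop : stirling1 n (n+1) = 0 := stirling1_eq_zero n (n+1) (Nat.lt_succ_self n)
    simp only [h0, htop, Nat.cast_zero, zero_mul, mul_zero, add_zero, pow_zero] at h
    rw [F]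
    linarith [h]
  have hexp : F (n+1) (k+1)
      = ∑ l ∈ Finset.range (n+2), (stirling1 (n+1) l : ℝ) * (stirling2 l (k+1) : ℝ) * (-1/2:ℝ)^l := rfl
  rw [hexp, Finset.sum_range_succ']
  have hterm : ∀ l ∈ Finset.range (n+1),
      (stirling1 (n+1) (l+1) : ℝ) * (stirling2 (l+1) (k+1) : ℝ) * (-1/2:ℝ)^(l+1)
      = (n:ℝ) * ((stirling1 n (l+1) : ℝ) * (stirling2 (l+1) (k+1) : ℝ) * (-1/2:ℝ)^(l+1))
        + ((-1/2) * ((k:ℝ)+1)) * ((stirling1 n l : ℝ) * (stirling2 l (k+1) : ℝ) * (-1/2:ℝ)^l)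
        + (-1/2) * ((stirling1 n l : ℝ) * (stirling2 l k : ℝ) * (-1/2:ℝ)^l) := by
    intro l _
    have e1 : stirling1 (n+1) (l+1) = n * stirling1 n (l+1) + stirling1 n l := rfl
    have e2 : stirling2 (l+1) (k+1) = (k+1) * stirling2 l (k+1) + stirling2 l k := rfl
    rw [e1, e2]
    push_cast
    ring
  rw [Finset.sum_congr rfl hterm, Finset.sum_add_distrib, Finset.sum_add_distrib,
    ← Finset.mul_sum, ← Finset.mul_sum, ← Finset.mul_sum, hshift]
  have hz : stirling1 (n+1) 0 = 0 := rfl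
  have key1 : F n (k+1) = ∑ l ∈ Finset.range (n+1), (stirling1 n l : ℝ) * (stirling2 l (k+1) : ℝ) * (-1/2:ℝ)^l := rfl
  have key2 : F n k = ∑ l ∈ Finset.range (n+1), (stirling1 n l : ℝ) * (stirling2 l k : ℝ) * (-1/2:ℝ)^l := rfl
  simp only [hz, Nat.cast_zero, zero_mul, pow_zero, mul_one, add_zero]
  rw [← key1, ← key2]
  ring

noncomputable def G (n k : ℕ) : ℝ :=
  if k = 0 then (if n = 0 then 1 else 0)
  else if n < k then 0
  else (-1)^k * ((2*n - k - 1).factorial : ℝ) /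
    (((k-1).factorial : ℝ) * ((n-k).factorial : ℝ) * 2^(2*n-k))

lemma G_eq (n k : ℕ) (h1 : 1 ≤ k) (h2 : k ≤ n) :
    G n k = (-1)^k * ((2*n - k - 1).factorial : ℝ) /
      (((k-1).factorial : ℝ) * ((n-k).factorial : ℝ) * 2^(2*n-k)) := by
  simp only [G, if_neg (by omega : ¬ k = 0), if_neg (by omega : ¬ n < k)]

lemma G_zero (n k : ℕ) (h : n < k) : G n k = 0 := by
  rcases Nat.eq_zero_or_pos k with rfl | hk
  · omega
  · simp only [G, if_neg (by omega : ¬ k = 0), if_pos h]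

lemma G_zero' (n : ℕ) (h : 1 ≤ n) : G n 0 = 0 := by
  have hn : n ≠ 0 := by omega
  simp [G, hn]

lemma G_rec (n k : ℕ) :
    G (n+1) (k+1) = ((n:ℝ) + (-1/2) * ((k:ℝ)+1)) * G n (k+1) + (-1/2) * G n k := by
  rcases lt_trichotomy n k with h | rfl | h
  · rw [G_zero _ _ (by omega), G_zero _ _ (by omega), G_zero _ _ (by omega)]
    ring
  · cases n with
    | zero =>
      have e0 : G 0 0 = 1 := by simp [G]
      have e1 : G 0 1 = 0 := G_zero 0 1 (by omega)
      have e2 : G 1 1 = -1/2 := by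
        rw [G_eq 1 1 le_rfl le_rfl]
        norm_num
      rw [e0, e1, e2]
      norm_num
    | succ m =>
      rw [G_zero (m+1) (m+1+1) (by omega), G_eq (m+1+1) (m+1+1) (by omega) le_rfl,
        G_eq (m+1) (m+1) (by omega) le_rfl]
      rw [show 2*(m+1+1)-(m+1+1)-1 = m+1 by omega, show 2*(m+1)-(m+1)-1 = m by omega,
        show (m+1+1)-(m+1+1) = 0 by omega, show (m+1)-(m+1) = 0 by omega,
        show 2*(m+1+1)-(m+1+1) = m+1+1 by omega, show 2*(m+1)-(m+1) = m+1 by omega,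
        show (m+1+1)-1 = m+1 by omega, show (m+1)-1 = m by omega]
      have g1 : ((m).factorial:ℝ) ≠ 0 := by positivity
      have g2 : (2:ℝ)^m ≠ 0 := by positivity
      push_cast [Nat.factorial_succ, pow_succ, Nat.factorial_zero]
      field_simp
      ring
  · obtain ⟨m, rfl⟩ : ∃ m, n = k + 1 + m := ⟨n - (k+1), by omega⟩
    cases k with
    | zero =>
      rw [G_zero' (0+1+m) (by omega), G_eq (0+1+m+1) (0+1) (by omega) (by omega),
        G_eq (0+1+m) (0+1) (by omega) (by omega)]
      rw [show 2*(0+1+m+1)-(0+1)-1 = 2*m+1+1 by omega, show 2*(0+1+m)-(0+1)-1 = 2*m by omega,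
        show (0+1+m+1)-(0+1) = m+1 by omega, show (0+1+m)-(0+1) = m by omega,
        show 2*(0+1+m+1)-(0+1) = 2*m+3 by omega, show 2*(0+1+m)-(0+1) = 2*m+1 by omega,
        show (0+1)-1 = 0 by omega,
        show 2*m+3 = 2*m+1+1+1 by omega, show (0:ℕ)+1+m = m+1 by omega]
      have g1 : ((m).factorial:ℝ) ≠ 0 := by positivity
      have g2 : ((2*m).factorial:ℝ) ≠ 0 := by positivity
      have g3 : (2:ℝ)^(2*m) ≠ 0 := by positivity
      push_cast [Nat.factorial_succ, pow_succ, Nat.factorial_zero]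
      field_simp
      ring
    | succ a =>
      rw [G_eq (a+1+1+m+1) (a+1+1) (by omega) (by omega),
        G_eq (a+1+1+m) (a+1+1) (by omega) (by omega),
        G_eq (a+1+1+m) (a+1) (by omega) (by omega)]
      rw [show 2*(a+1+1+m+1)-(a+1+1)-1 = a+2*m+1+1+1 by omega,
        show 2*(a+1+1+m)-(a+1+1)-1 = a+2*m+1 by omega,
        show 2*(a+1+1+m)-(a+1)-1 = a+2*m+1+1 by omega,
        show (a+1+1+m+1)-(a+1+1) = m+1 by omega,
        show (a+1+1+m)-(a+1+1) = m by omega,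
        show (a+1+1+m)-(a+1) = m+1 by omega,
        show 2*(a+1+1+m+1)-(a+1+1) = a+2*m+1+1+1+1 by omega,
        show 2*(a+1+1+m)-(a+1+1) = a+2*m+1+1 by omega,
        show 2*(a+1+1+m)-(a+1) = a+2*m+1+1+1 by omega,
        show (a+1+1)-1 = a+1 by omega, show (a+1)-1 = a by omega,
        show a+2*m+1 = a+2*m+1 from rfl]
      have g1 : ((m).factorial:ℝ) ≠ 0 := by positivity
      have g2 : ((a).factorial:ℝ) ≠ 0 := by positivity
      have g3 : ((a+2*m).factorial:ℝ) ≠ 0 := by positivity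
      have g4 : (2:ℝ)^(a+2*m) ≠ 0 := by positivity
      push_cast [Nat.factorial_succ, pow_succ, Nat.factorial_zero]
      field_simp
      ring

lemma F_eq_G : ∀ n k, F n k = G n k := by
  intro n
  induction n with
  | zero =>
    intro k
    cases k with
    | zero =>
      have : F 0 0 = 1 := by simp [F, stirling1, stirling2]
      simp [this, G]
    | succ k =>
      have h1 : F 0 (k+1) = 0 := by
        simp [F, stirling2_eq_zero 0 (k+1) (by omega)]
      rw [h1, G_zero 0 (k+1) (by omega)]
  | succ n ih =>
    intro k
    cases k with
    | zero =>
      have h1 : F (n+1) 0 = 0 := by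
        rw [F]
        apply Finset.sum_eq_zero
        intro l hl
        cases l with
        | zero => simp [show stirling1 (n+1) 0 = 0 from rfl]
        | succ l => simp [show stirling2 (l+1) 0 = 0 from rfl]
      rw [h1, G_zero' (n+1) (by omega)]
    | succ k =>
      rw [F_succ_succ, ih, ih, G_rec]

lemma sum_Icc_eq_F (n k : ℕ) (hk : 1 ≤ k) :
    ∑ l ∈ Finset.Icc k n, (stirling1 n l : ℝ) * (stirling2 l k : ℝ) * (-1/2:ℝ)^l = F n k := by
  rw [F]
  apply Finset.sum_subset
  · intro l hl
    simp only [Finset.mem_Icc] at hl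
    simp only [Finset.mem_range]
    omega
  · intro l hl hnot
    simp only [Finset.mem_range] at hl
    simp only [Finset.mem_Icc] at hnot
    have : l < k := by omega
    simp [stirling2_eq_zero l k this]

/-- Equality of the Bessel spider joint moment formula (Theorem 6)
specialized to `ν = -1/2` with the Brownian spider joint moment formula
(Theorem 7): with `N = n₁ + ⋯ + n_r`, `K = k₁ + ⋯ + k_r`, `L = l₁ + ⋯ + l_r`,
`∑_{1 ≤ k_j ≤ l_j ≤ n_j} (-1)^{K-1} ((K-1)!/(N-1)!) (-1/2)^{L-1}
    ∏_j c(n_j,l_j) S(l_j,k_j) β_j^{k_j}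
 = ∑_{1 ≤ k_j ≤ n_j} 2^{-(2N-K-1)} ((K-1)!/(N-1)!)
    ∏_j (2n_j-k_j-1)! β_j^{k_j} / ((k_j-1)! (n_j-k_j)!)`. -/
theorem bessel_to_brownian_joint_moment (r : ℕ) (hr : 1 ≤ r)
    (n : Fin r → ℕ) (hn : ∀ j, 1 ≤ n j) (β : Fin r → ℝ) :
    (∑ l ∈ Fintype.piFinset fun j => Finset.Icc 1 (n j),
        ∑ k ∈ Fintype.piFinset fun j => Finset.Icc 1 (l j),
          (-1 : ℝ) ^ ((∑ j, k j) - 1) *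
            ((((∑ j, k j) - 1).factorial : ℝ) / (((∑ j, n j) - 1).factorial : ℝ)) *
            (-(1 : ℝ) / 2) ^ ((∑ j, l j) - 1) *
            ∏ j, (stirling1 (n j) (l j) : ℝ) * (stirling2 (l j) (k j) : ℝ) * β j ^ k j)
      = ∑ k ∈ Fintype.piFinset fun j => Finset.Icc 1 (n j),
          ((2 : ℝ) ^ (2 * (∑ j, n j) - (∑ j, k j) - 1))⁻¹ *
            ((((∑ j, k j) - 1).factorial : ℝ) / (((∑ j, n j) - 1).factorial : ℝ)) *
            ∏ j, ((2 * n j - k j - 1).factorial : ℝ) * β j ^ k j /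
              (((k j - 1).factorial : ℝ) * ((n j - k j).factorial : ℝ)) := by
    classical
  have hmem : ∀ (l k : Fin r → ℕ),
      ((l ∈ Fintype.piFinset fun j => Finset.Icc 1 (n j)) ∧
        k ∈ Fintype.piFinset fun j => Finset.Icc 1 (l j))
      ↔ ((l ∈ Fintype.piFinset fun j => Finset.Icc (k j) (n j)) ∧
        k ∈ Fintype.piFinset fun j => Finset.Icc 1 (n j)) := by
    intro l k
    simp only [Fintype.mem_piFinset, Finset.mem_Icc]
    constructor
    · rintro ⟨h1, h2⟩
      exact ⟨fun j => ⟨(h2 j).2, (h1 j).2⟩, fun j => ⟨(h2 j).1, le_trans (h2 j).2 (h1 j).2⟩⟩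
    · rintro ⟨h1, h2⟩
      exact ⟨fun j => ⟨le_trans (h2 j).1 (h1 j).1, (h1 j).2⟩, fun j => ⟨(h2 j).1, (h1 j).1⟩⟩
  rw [Finset.sum_comm' hmem]
  refine Finset.sum_congr rfl fun k hk => ?_
  simp only [Fintype.mem_piFinset, Finset.mem_Icc] at hk
  have hK : 1 ≤ ∑ j, k j := by
    calc 1 ≤ r := hr
    _ = ∑ _j : Fin r, 1 := by simp
    _ ≤ ∑ j, k j := Finset.sum_le_sum fun j _ => (hk j).1
  have hKN : ∑ j, k j ≤ ∑ j, n j := Finset.sum_le_sum fun j _ => (hk j).2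
  have hN : 1 ≤ ∑ j, n j := le_trans hK hKN
  have hsummand : ∀ l ∈ Fintype.piFinset fun j => Finset.Icc (k j) (n j),
      ((-1 : ℝ) ^ ((∑ j, k j) - 1) *
            ((((∑ j, k j) - 1).factorial : ℝ) / (((∑ j, n j) - 1).factorial : ℝ)) *
            (-(1 : ℝ) / 2) ^ ((∑ j, l j) - 1) *
            ∏ j, (stirling1 (n j) (l j) : ℝ) * (stirling2 (l j) (k j) : ℝ) * β j ^ k j)
      = ((-1 : ℝ) ^ ((∑ j, k j) - 1) *
            ((((∑ j, k j) - 1).factorial : ℝ) / (((∑ j, n j) - 1).factorial : ℝ)) * (-2)) *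
          ∏ j, ((stirling1 (n j) (l j) : ℝ) * (stirling2 (l j) (k j) : ℝ) * β j ^ k j
            * (-1/2:ℝ)^(l j)) := by
    intro l hl
    simp only [Fintype.mem_piFinset, Finset.mem_Icc] at hl
    have hL : 1 ≤ ∑ j, l j :=
      le_trans hK (Finset.sum_le_sum fun j _ => (hl j).1)
    have hprod : ∏ j, ((stirling1 (n j) (l j) : ℝ) * (stirling2 (l j) (k j) : ℝ) * β j ^ k j
            * (-1/2:ℝ)^(l j))
        = (∏ j, (stirling1 (n j) (l j) : ℝ) * (stirling2 (l j) (k j) : ℝ) * β j ^ k j)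
          * (-1/2:ℝ) ^ (∑ j, l j) := by
      rw [Finset.prod_mul_distrib, Finset.prod_pow_eq_pow_sum]
    rw [hprod]
    have hpow : (-(1:ℝ)/2) ^ ((∑ j, l j) - 1) = (-2) * (-1/2:ℝ) ^ (∑ j, l j) := by
      rw [show (∑ j, l j) = ((∑ j, l j) - 1) + 1 by omega, pow_succ]
      rw [show ((∑ j, l j) - 1 + 1 - 1) = (∑ j, l j) - 1 by omega]
      ring
    rw [hpow]
    ring
  rw [Finset.sum_congr rfl hsummand, ← Finset.mul_sum,
    ← Finset.prod_univ_sum (fun j => Finset.Icc (k j) (n j))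
      (fun j t => (stirling1 (n j) t : ℝ) * (stirling2 t (k j) : ℝ) * β j ^ k j * (-1/2:ℝ)^t)]
  have hinner : ∀ j : Fin r,
      (∑ x ∈ Finset.Icc (k j) (n j),
        (stirling1 (n j) x : ℝ) * (stirling2 x (k j) : ℝ) * β j ^ k j * (-1/2:ℝ)^x)
      = ((-1:ℝ)^(k j) * ((2:ℝ)^(2*(n j) - k j))⁻¹) *
        (((2 * n j - k j - 1).factorial : ℝ) * β j ^ k j /
          (((k j - 1).factorial : ℝ) * ((n j - k j).factorial : ℝ))) := by
    intro j
    have h1 : (∑ x ∈ Finset.Icc (k j) (n j),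
        (stirling1 (n j) x : ℝ) * (stirling2 x (k j) : ℝ) * β j ^ k j * (-1/2:ℝ)^x)
        = (∑ x ∈ Finset.Icc (k j) (n j),
            (stirling1 (n j) x : ℝ) * (stirling2 x (k j) : ℝ) * (-1/2:ℝ)^x) * β j ^ k j := by
      rw [Finset.sum_mul]
      exact Finset.sum_congr rfl fun x _ => by ring
    rw [h1, sum_Icc_eq_F _ _ (hk j).1, F_eq_G, G_eq _ _ (hk j).1 (hk j).2]
    have g1 : (((k j - 1).factorial : ℝ)) ≠ 0 := by positivity
    have g2 : (((n j - k j).factorial : ℝ)) ≠ 0 := by positivity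
    have g3 : ((2:ℝ)^(2*(n j) - k j)) ≠ 0 := by positivity
    field_simp
  rw [Finset.prod_congr rfl fun j _ => hinner j, Finset.prod_mul_distrib,
    Finset.prod_mul_distrib, Finset.prod_pow_eq_pow_sum, Finset.prod_inv_distrib,
    Finset.prod_pow_eq_pow_sum]
  have hsub : ∑ j, (2 * n j - k j) = 2 * (∑ j, n j) - (∑ j, k j) := by
    rw [Finset.sum_tsub_distrib _ (fun j _ => by have := hk j; omega : ∀ j ∈ Finset.univ, k j ≤ 2 * n j),
      ← Finset.mul_sum]
  rw [hsub]
  have hodd : Odd ((∑ j, k j) - 1 + ∑ j, k j) := ⟨(∑ j, k j) - 1, by omega⟩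
  have hsgn : (-1:ℝ)^((∑ j, k j) - 1) * (-1:ℝ)^(∑ j, k j) = -1 := by
    rw [← pow_add]
    exact Odd.neg_one_pow hodd
  have h2pow : (2:ℝ)^(2*(∑ j, n j) - (∑ j, k j))
      = 2 * (2:ℝ)^(2*(∑ j, n j) - (∑ j, k j) - 1) := by
    rw [← pow_succ']
    congr 1
    omega
  rw [h2pow]
  linear_combination ((((∑ j, k j) - 1).factorial : ℝ) / (((∑ j, n j) - 1).factorial : ℝ)) *
    (-2) * ((2 * (2:ℝ)^(2*(∑ j, n j) - (∑ j, k j) - 1))⁻¹) *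
    (∏ j, (((2 * n j - k j - 1).factorial : ℝ) * β j ^ k j /
      (((k j - 1).factorial : ℝ) * ((n j - k j).factorial : ℝ)))) * hsgn
end
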